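/- arXiv:1510.04425 — 8 statements merged into one kernel-verified Lean document; each statement's English description precedes it below -/
import Mathlib

section
/- Let s, b₁, b₂ ∈ ℝ³ with ‖s‖ ≤ 2, ‖b₁‖ ≤ 1, ‖b₂‖ ≤ 1, and let x, y ∈ ℝ with |x| ≤ 1 and |y| ≤ 1. Then (1/2)|x (s·(b₁ + b₂)) + y (s·(b₁ − b₂))| ≤ 2. -/
open RealInnerProductSpace Real

theorem stmt_0 (s b₁ b₂ : EuclideanSpace ℝ (Fin 3)) (x y : ℝ)
    (hs : ‖s‖ ≤ 2) (hb₁ : ‖b₁‖ ≤ 1) (hb₂ : ‖b₂‖ ≤ 1)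
    (hx : |x| ≤ 1) (hy : |y| ≤ 1) :
    (1 / 2) * |x * ⟪s, b₁ + b₂⟫ + y * ⟪s, b₁ - b₂⟫| ≤ 2 := by
  have hu : |⟪s, b₁⟫| ≤ 2 := by
    calc |⟪s, b₁⟫| ≤ ‖s‖ * ‖b₁‖ := abs_real_inner_le_norm s b₁
    _ ≤ 2 * 1 := by
        apply mul_le_mul hs hb₁ (norm_nonneg _) (by norm_num)
    _ = 2 := by norm_num
  have hv : |⟪s, b₂⟫| ≤ 2 := by
    calc |⟪s, b₂⟫| ≤ ‖s‖ * ‖b₂‖ := abs_real_inner_le_norm s b₂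
    _ ≤ 2 * 1 := by
        apply mul_le_mul hs hb₂ (norm_nonneg _) (by norm_num)
    _ = 2 := by norm_num
  rw [inner_add_right, inner_sub_right]
  set u := ⟪s, b₁⟫
  set v := ⟪s, b₂⟫
  rw [abs_le] at hu hv hx hy
  have h4 : |x * (u + v) + y * (u - v)| ≤ 4 := by
    have he : x * (u + v) + y * (u - v) = (x + y) * u + (x - y) * v := by ring
    rw [he]
    have hxy : |x + y| + |x - y| ≤ 2 := by
      rcases abs_cases (x + y) with ⟨h1, _⟩ | ⟨h1, _⟩ <;>
        rcases abs_cases (x - y) with ⟨h2, _⟩ | ⟨h2, _⟩ <;> linarith [hx.1, hx.2, hy.1, hy.2]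
    calc |(x + y) * u + (x - y) * v| ≤ |(x + y) * u| + |(x - y) * v| := abs_add_le _ _
    _ = |x + y| * |u| + |x - y| * |v| := by rw [abs_mul, abs_mul]
    _ ≤ |x + y| * 2 + |x - y| * 2 := by
        have h1 : |u| ≤ 2 := abs_le.2 hu
        have h2 : |v| ≤ 2 := abs_le.2 hv
        gcongr
    _ ≤ 4 := by linarith
  linarith [h4]
end

section
/- Let a₁, a₂, v, c ∈ ℝ³ be vectors with ‖a₁‖ = ‖a₂‖ = 1, ‖v‖ ≤ 1, ‖c‖ = 1. Then the supremum of E₁₃ + E₁₄ + E₂₃ − E₂₄ where E_{i3} = a_i·c and E_{i4} = a_i·v, over all choices of unit vectors a₁, a₂, equals 2√(1 + ‖v‖²) when c ⊥ v can be chosen; in particular, choosing a₁ + a₂ parallel to c and a₁ − a₂ parallel to v gives the value 2√(1 + ‖v‖²). -/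
open RealInnerProductSpace Real

theorem stmt_4 (c v : EuclideanSpace ℝ (Fin 3)) (hc : ‖c‖ = 1) (hv : ‖v‖ ≤ 1)
    (hcv : ⟪c, v⟫ = 0) :
    IsLUB {x : ℝ | ∃ a₁ a₂ : EuclideanSpace ℝ (Fin 3), ‖a₁‖ = 1 ∧ ‖a₂‖ = 1 ∧
        x = ⟪a₁, c⟫ + ⟪a₂, c⟫ + ⟪a₁, v⟫ - ⟪a₂, v⟫}
      (2 * Real.sqrt (1 + ‖v‖ ^ 2)) ∧
    ∃ a₁ a₂ : EuclideanSpace ℝ (Fin 3), ‖a₁‖ = 1 ∧ ‖a₂‖ = 1 ∧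
      (∃ t : ℝ, a₁ + a₂ = t • c) ∧ (∃ t : ℝ, a₁ - a₂ = t • v) ∧
      ⟪a₁, c⟫ + ⟪a₂, c⟫ + ⟪a₁, v⟫ - ⟪a₂, v⟫ = 2 * Real.sqrt (1 + ‖v‖ ^ 2) := by
  set k : ℝ := Real.sqrt (1 + ‖v‖ ^ 2) with hkdef
  have hk0 : (0:ℝ) < k := Real.sqrt_pos.mpr (by positivity)
  have hk2 : k ^ 2 = 1 + ‖v‖ ^ 2 := Real.sq_sqrt (by positivity)
  have hvc : ⟪v, c⟫ = 0 := by rw [real_inner_comm]; exact hcv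
  have hplus : ‖c + v‖ = k := by
    have : ‖c + v‖ ^ 2 = 1 + ‖v‖ ^ 2 := by
      rw [norm_add_sq_real, hc, hcv]; ring
    calc ‖c + v‖ = Real.sqrt (‖c + v‖ ^ 2) := (Real.sqrt_sq (norm_nonneg _)).symm
      _ = k := by rw [this]
  have hminus : ‖c - v‖ = k := by
    have : ‖c - v‖ ^ 2 = 1 + ‖v‖ ^ 2 := by
      rw [norm_sub_sq_real, hc, hcv]; ring
    calc ‖c - v‖ = Real.sqrt (‖c - v‖ ^ 2) := (Real.sqrt_sq (norm_nonneg _)).symm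
      _ = k := by rw [this]
  -- fix hplus similarly
  set a₁ : EuclideanSpace ℝ (Fin 3) := k⁻¹ • (c + v) with ha1
  set a₂ : EuclideanSpace ℝ (Fin 3) := k⁻¹ • (c - v) with ha2
  have hna1 : ‖a₁‖ = 1 := by
    rw [ha1, norm_smul, hplus, norm_inv, Real.norm_eq_abs, abs_of_pos hk0,
      inv_mul_cancel₀ hk0.ne']
  have hna2 : ‖a₂‖ = 1 := by
    rw [ha2, norm_smul, hminus, norm_inv, Real.norm_eq_abs, abs_of_pos hk0,
      inv_mul_cancel₀ hk0.ne']
  have hcc : ⟪c, c⟫ = 1 := by rw [real_inner_self_eq_norm_sq, hc]; norm_num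
  have hvv : ⟪v, v⟫ = ‖v‖ ^ 2 := by rw [real_inner_self_eq_norm_sq]
  have hval : ⟪a₁, c⟫ + ⟪a₂, c⟫ + ⟪a₁, v⟫ - ⟪a₂, v⟫ = 2 * k := by
    rw [ha1, ha2]
    rw [real_inner_smul_left, real_inner_smul_left, real_inner_smul_left,
      real_inner_smul_left, inner_add_left, inner_add_left, inner_sub_left,
      inner_sub_left, hcc, hvv, hcv, hvc]
    have : k⁻¹ * (1 + 0) + k⁻¹ * (1 - 0) + k⁻¹ * (0 + ‖v‖ ^ 2) - k⁻¹ * (0 - ‖v‖ ^ 2)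
        = k⁻¹ * (2 * (1 + ‖v‖ ^ 2)) := by ring
    rw [this, ← hk2]
    field_simp
  constructor
  · constructor
    · rintro x ⟨b₁, b₂, hb1, hb2, rfl⟩
      have h1 : ⟪b₁, c⟫ + ⟪b₁, v⟫ = ⟪b₁, c + v⟫ := (inner_add_right _ _ _).symm
      have h2 : ⟪b₂, c⟫ - ⟪b₂, v⟫ = ⟪b₂, c - v⟫ := (inner_sub_right _ _ _).symm
      have e1 : ⟪b₁, c + v⟫ ≤ k := by
        calc ⟪b₁, c + v⟫ ≤ ‖b₁‖ * ‖c + v‖ := real_inner_le_norm _ _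
          _ = k := by rw [hb1, hplus, one_mul]
      have e2 : ⟪b₂, c - v⟫ ≤ k := by
        calc ⟪b₂, c - v⟫ ≤ ‖b₂‖ * ‖c - v‖ := real_inner_le_norm _ _
          _ = k := by rw [hb2, hminus, one_mul]
      have : ⟪b₁, c⟫ + ⟪b₂, c⟫ + ⟪b₁, v⟫ - ⟪b₂, v⟫
          = ⟪b₁, c + v⟫ + ⟪b₂, c - v⟫ := by
        rw [← h1, ← h2]; ring
      rw [this]; linarith
    · intro x hx
      have : (2 * k) ∈ {x : ℝ | ∃ a₁ a₂ : EuclideanSpace ℝ (Fin 3), ‖a₁‖ = 1 ∧ ‖a₂‖ = 1 ∧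
          x = ⟪a₁, c⟫ + ⟪a₂, c⟫ + ⟪a₁, v⟫ - ⟪a₂, v⟫} :=
        ⟨a₁, a₂, hna1, hna2, hval.symm⟩
      exact hx this
  · exact ⟨a₁, a₂, hna1, hna2,
      ⟨2 * k⁻¹, by rw [ha1, ha2]; module⟩,
      ⟨2 * k⁻¹, by rw [ha1, ha2]; module⟩, hval⟩
end

section
/- For every r ∈ [0,1] there exist unit vectors a₁, a₂, c, v ∈ ℝ³ with ‖v‖ = r, c ⊥ v, a₁ + a₂ parallel to c, and a₁ − a₂ parallel to v, such that a₁·c + a₂·c + a₁·v − a₂·v = 2√(1 + r²); consequently for every r > 0 the classical bound 2 is exceeded. -/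
open RealInnerProductSpace Real

theorem stmt_5 (r : ℝ) (hr0 : 0 ≤ r) (hr1 : r ≤ 1) :
    (∃ a₁ a₂ c v : EuclideanSpace ℝ (Fin 3),
      ‖a₁‖ = 1 ∧ ‖a₂‖ = 1 ∧ ‖c‖ = 1 ∧ ‖v‖ = r ∧ ⟪c, v⟫ = 0 ∧
      (∃ t : ℝ, a₁ + a₂ = t • c) ∧ (∃ t : ℝ, a₁ - a₂ = t • v) ∧
      ⟪a₁, c⟫ + ⟪a₂, c⟫ + ⟪a₁, v⟫ - ⟪a₂, v⟫ = 2 * Real.sqrt (1 + r ^ 2)) ∧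
    (0 < r → 2 < 2 * Real.sqrt (1 + r ^ 2)) := by
  set s := Real.sqrt (1 + r ^ 2) with hsdef
  have h1r : (0:ℝ) < 1 + r ^ 2 := by positivity
  have hs2 : s ^ 2 = 1 + r ^ 2 := Real.sq_sqrt h1r.le
  have hs0 : 0 < s := Real.sqrt_pos.mpr h1r
  constructor
  · refine ⟨(EuclideanSpace.equiv (Fin 3) ℝ).symm ![1/s, r/s, 0],
      (EuclideanSpace.equiv (Fin 3) ℝ).symm ![1/s, -(r/s), 0],
      (EuclideanSpace.equiv (Fin 3) ℝ).symm ![1, 0, 0],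
      (EuclideanSpace.equiv (Fin 3) ℝ).symm ![0, r, 0], ?_, ?_, ?_, ?_, ?_, ?_, ?_, ?_⟩
    · rw [EuclideanSpace.norm_eq]
      simp [Fin.sum_univ_three, abs_div]
      field_simp
      nlinarith [hs2]
    · rw [EuclideanSpace.norm_eq]
      simp [Fin.sum_univ_three, abs_div]
      field_simp
      nlinarith [hs2]
    · rw [EuclideanSpace.norm_eq]
      simp [Fin.sum_univ_three]
    · rw [EuclideanSpace.norm_eq]
      simp [Fin.sum_univ_three, sq_abs]
      rw [Real.sqrt_sq hr0]
    · rw [PiLp.inner_apply]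
      simp [Fin.sum_univ_three]
    · refine ⟨2/s, ?_⟩
      ext i
      fin_cases i <;> simp <;> ring
    · refine ⟨2/s, ?_⟩
      ext i
      fin_cases i <;> simp <;> ring
    · rw [PiLp.inner_apply, PiLp.inner_apply, PiLp.inner_apply, PiLp.inner_apply]
      simp [Fin.sum_univ_three]
      field_simp
      nlinarith [hs2]
  · intro hr
    have : (1:ℝ) < Real.sqrt (1 + r ^ 2) := by
      have := Real.lt_sqrt (x := 1) (y := 1 + r ^ 2) (by norm_num)
      rw [this]; nlinarith
    linarith
end

section
/- Let c, a₁, b₁, b₂, r₊, r₋ ∈ ℝ³ with ‖c‖ = ‖a₁‖ = ‖b₁‖ = ‖b₂‖ = ‖r₊‖ = ‖r₋‖ = 1, and let a₂ ∈ ℝ³ be a unit vector. Then the supremum over all such vectors of (1/2)(c·a₁)((b₁+b₂)·(r₊−r₋)) + a₂·(b₁−b₂) equals 2√2. -/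
open RealInnerProductSpace Real

/-!
By Cauchy–Schwarz the first term of the Bell function is at most `‖b₁ + b₂‖` (as
`|⟪c, a₁⟫| ≤ 1` and `‖r₊ - r₋‖ ≤ 2`) and the second at most `‖b₁ - b₂‖`. For unit `b₁`, `b₂`
the parallelogram law gives `‖b₁ + b₂‖² + ‖b₁ - b₂‖² = 4`, so the sum is at most `2√2`.
Equality holds for orthonormal `u`, `v` with `c = a₁ = r₊ = -r₋ = u`, `a₂ = v` and
`b₁, b₂ = (u ± v) / √2`, i.e. `θ = π / 4`.
-/

section BellFunction

variable {E : Type*} [NormedAddCommGroup E] [InnerProductSpace ℝ E]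

/-- The Bell function `B_EBT`; `rp`, `rm` are the channel outputs `r₊`, `r₋`. -/
noncomputable def bellEBT (c a₁ a₂ b₁ b₂ rp rm : E) : ℝ :=
  (1 / 2) * ⟪c, a₁⟫ * ⟪b₁ + b₂, rp - rm⟫ + ⟪a₂, b₁ - b₂⟫

lemma add_le_two_mul_sqrt_two_of_sq_add_sq_eq_four {s t : ℝ} (h : s ^ 2 + t ^ 2 = 4) :
    s + t ≤ 2 * √2 := by
  nlinarith [sq_nonneg (s - t), sq_sqrt (show (0 : ℝ) ≤ 2 by norm_num), sqrt_nonneg 2]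

lemma norm_add_add_norm_sub_le_two_mul_sqrt_two {b₁ b₂ : E} (hb₁ : ‖b₁‖ = 1) (hb₂ : ‖b₂‖ = 1) :
    ‖b₁ + b₂‖ + ‖b₁ - b₂‖ ≤ 2 * √2 := by
  apply add_le_two_mul_sqrt_two_of_sq_add_sq_eq_four
  have := parallelogram_law_with_norm ℝ b₁ b₂
  rw [hb₁, hb₂] at this
  linarith

lemma half_mul_inner_mul_inner_sub_le {c a u rp rm : E} (hc : ‖c‖ = 1) (ha : ‖a‖ = 1)
    (hrp : ‖rp‖ = 1) (hrm : ‖rm‖ = 1) :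
    (1 / 2) * ⟪c, a⟫ * ⟪u, rp - rm⟫ ≤ ‖u‖ := by
  have hca : |⟪c, a⟫| ≤ 1 := by
    simpa [hc, ha] using abs_real_inner_le_norm c a
  have hr : ‖rp - rm‖ ≤ 2 := by
    linarith [norm_sub_le rp rm]
  have hur : |⟪u, rp - rm⟫| ≤ ‖u‖ * 2 :=
    (abs_real_inner_le_norm u _).trans (by gcongr)
  calc (1 / 2) * ⟪c, a⟫ * ⟪u, rp - rm⟫
      ≤ (1 / 2) * (|⟪c, a⟫| * |⟪u, rp - rm⟫|) := by
        rw [mul_assoc, ← abs_mul]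
        exact mul_le_mul_of_nonneg_left (le_abs_self _) (by norm_num)
    _ ≤ (1 / 2) * (1 * (‖u‖ * 2)) := by gcongr
    _ = ‖u‖ := by ring

lemma bellEBT_le {c a₁ a₂ b₁ b₂ rp rm : E} (hc : ‖c‖ = 1) (ha₁ : ‖a₁‖ = 1) (ha₂ : ‖a₂‖ = 1)
    (hb₁ : ‖b₁‖ = 1) (hb₂ : ‖b₂‖ = 1) (hrp : ‖rp‖ = 1) (hrm : ‖rm‖ = 1) :
    bellEBT c a₁ a₂ b₁ b₂ rp rm ≤ 2 * √2 := by
  have hfirst := half_mul_inner_mul_inner_sub_le (u := b₁ + b₂) hc ha₁ hrp hrm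
  have hsecond : ⟪a₂, b₁ - b₂⟫ ≤ ‖b₁ - b₂‖ := by
    simpa [ha₂] using real_inner_le_norm a₂ (b₁ - b₂)
  have hsum := norm_add_add_norm_sub_le_two_mul_sqrt_two hb₁ hb₂
  unfold bellEBT
  linarith

lemma norm_inv_sqrt_two_smul {w : E} (hw : ‖w‖ ^ 2 = 2) : ‖(√2)⁻¹ • w‖ = 1 := by
  have : ‖w‖ = √2 := by rw [← hw, sqrt_sq (norm_nonneg w)]
  simp [norm_smul, this, abs_of_nonneg]

lemma bellEBT_of_norm_eq_one {u v : E} (hu : ‖u‖ = 1) (hv : ‖v‖ = 1) :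
    bellEBT u u v ((√2)⁻¹ • (u + v)) ((√2)⁻¹ • (u - v)) u (-u) = 2 * √2 := by
  rw [bellEBT, ← smul_add, ← smul_sub, add_add_sub_cancel, add_sub_sub_cancel, sub_neg_eq_add]
  simp only [real_inner_smul_left, real_inner_smul_right, inner_add_left, inner_add_right,
    real_inner_self_eq_norm_sq, hu, hv]
  field_simp
  norm_num

end BellFunction

theorem stmt_6 :
    IsLUB {x : ℝ | ∃ c a₁ a₂ b₁ b₂ rp rm : EuclideanSpace ℝ (Fin 3),
        ‖c‖ = 1 ∧ ‖a₁‖ = 1 ∧ ‖a₂‖ = 1 ∧ ‖b₁‖ = 1 ∧ ‖b₂‖ = 1 ∧ ‖rp‖ = 1 ∧ ‖rm‖ = 1 ∧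
        x = (1 / 2) * ⟪c, a₁⟫ * ⟪b₁ + b₂, rp - rm⟫ + ⟪a₂, b₁ - b₂⟫}
      (2 * Real.sqrt 2) := by
  set u : EuclideanSpace ℝ (Fin 3) := EuclideanSpace.single 0 1
  set v : EuclideanSpace ℝ (Fin 3) := EuclideanSpace.single 1 1
  have hu : ‖u‖ = 1 := by simp [u]
  have hv : ‖v‖ = 1 := by simp [v]
  have huv : ⟪u, v⟫ = 0 := by simp [u, v, EuclideanSpace.inner_single_left]
  have hadd : ‖u + v‖ ^ 2 = 2 := by
    rw [norm_add_sq_real, hu, hv, huv]; norm_num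
  have hsub : ‖u - v‖ ^ 2 = 2 := by
    rw [norm_sub_sq_real, hu, hv, huv]; norm_num
  refine IsGreatest.isLUB ⟨?_, ?_⟩
  · exact ⟨u, u, v, _, _, u, -u, hu, hu, hv, norm_inv_sqrt_two_smul hadd,
      norm_inv_sqrt_two_smul hsub, hu, by rw [norm_neg, hu], (bellEBT_of_norm_eq_one hu hv).symm⟩
  · rintro x ⟨c, a₁, a₂, b₁, b₂, rp, rm, hc, ha₁, ha₂, hb₁, hb₂, hrp, hrm, rfl⟩
    exact bellEBT_le hc ha₁ ha₂ hb₁ hb₂ hrp hrm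
end

section
/- Let a₁, a₂, b₁, b₂ ∈ ℝ³ be unit vectors and R a rotation (element of SO(3)). Then (a₁+a₂)·b₁ + (a₁ − R a₂)·b₂ ≤ 4, and there is a choice with a₁ = a₂ = b₁ = b₂ and R a₂ = −a₂ achieving the value 4. -/
/-! Each of the two correlators is at most `2` by Cauchy–Schwarz and the triangle inequality,
since a rotation preserves the norm of `a₂`. Both bounds are attained at once when all four
vectors coincide and `R` reverses `a₂`, e.g. `a₂ = e₀` and `R` the rotation by `π` about `e₂`:
then `a₁ + a₂ = a₁ - R a₂ = 2 b₁ = 2 b₂`. -/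

open RealInnerProductSpace Real

noncomputable def act (M : Matrix (Fin 3) (Fin 3) ℝ) (x : EuclideanSpace ℝ (Fin 3)) :
    EuclideanSpace ℝ (Fin 3) := Matrix.toEuclideanLin M x

theorem real_inner_add_le_two {E : Type*} [NormedAddCommGroup E] [InnerProductSpace ℝ E]
    {x y z : E} (hx : ‖x‖ = 1) (hy : ‖y‖ = 1) (hz : ‖z‖ = 1) : ⟪x + y, z⟫ ≤ 2 :=
  calc ⟪x + y, z⟫ ≤ ‖x + y‖ * ‖z‖ := real_inner_le_norm _ _
    _ ≤ (‖x‖ + ‖y‖) * ‖z‖ := by gcongr; exact norm_add_le _ _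
    _ = 2 := by rw [hx, hy, hz]; norm_num

theorem real_inner_sub_le_two {E : Type*} [NormedAddCommGroup E] [InnerProductSpace ℝ E]
    {x y z : E} (hx : ‖x‖ = 1) (hy : ‖y‖ = 1) (hz : ‖z‖ = 1) : ⟪x - y, z⟫ ≤ 2 := by
  rw [sub_eq_add_neg]
  exact real_inner_add_le_two hx (by rwa [norm_neg]) hz

namespace Matrix

variable {n : Type*} [Fintype n] [DecidableEq n]

theorem norm_toEuclideanLin_of_mem_unitaryGroup {𝕜 : Type*} [RCLike 𝕜] {U : Matrix n n 𝕜}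
    (hU : U ∈ unitaryGroup n 𝕜) (x : EuclideanSpace 𝕜 n) : ‖toEuclideanLin U x‖ = ‖x‖ :=
  ContinuousLinearMap.norm_map_of_mem_unitary
    (Unitary.map_mem (toEuclideanCLM (n := n) (𝕜 := 𝕜)) hU) x

theorem toEuclideanLin_diagonal_single {𝕜 : Type*} [RCLike 𝕜] (d : n → 𝕜) (j : n) (c : 𝕜) :
    toEuclideanLin (diagonal d) (EuclideanSpace.single j c) = d j • EuclideanSpace.single j c := by
  ext i
  simp [toLpLin_apply, EuclideanSpace.single, mul_comm]

attribute [local instance] starRingOfComm in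
theorem diagonal_mem_specialOrthogonalGroup {R : Type*} [CommRing R] {d : n → R}
    (hsq : ∀ i, d i * d i = 1) (hprod : ∏ i, d i = 1) :
    diagonal d ∈ specialOrthogonalGroup n R := by
  refine mem_specialOrthogonalGroup_iff.mpr
    ⟨(mem_orthogonalGroup_iff n R).mpr ?_, by rwa [det_diagonal]⟩
  rw [diagonal_transpose, diagonal_mul_diagonal, ← diagonal_one]
  exact congrArg diagonal (funext hsq)

end Matrix

theorem stmt_7 :
    (∀ (a₁ a₂ b₁ b₂ : EuclideanSpace ℝ (Fin 3)),
      ‖a₁‖ = 1 → ‖a₂‖ = 1 → ‖b₁‖ = 1 → ‖b₂‖ = 1 →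
      ∀ R : Matrix.specialOrthogonalGroup (Fin 3) ℝ,
        ⟪a₁ + a₂, b₁⟫ + ⟪a₁ - act (R : Matrix (Fin 3) (Fin 3) ℝ) a₂, b₂⟫ ≤ 4) ∧
    (∃ (a₁ a₂ b₁ b₂ : EuclideanSpace ℝ (Fin 3))
       (R : Matrix.specialOrthogonalGroup (Fin 3) ℝ),
      ‖a₁‖ = 1 ∧ a₁ = a₂ ∧ a₂ = b₁ ∧ b₁ = b₂ ∧
      act (R : Matrix (Fin 3) (Fin 3) ℝ) a₂ = -a₂ ∧
      ⟪a₁ + a₂, b₁⟫ + ⟪a₁ - act (R : Matrix (Fin 3) (Fin 3) ℝ) a₂, b₂⟫ = 4) := by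
  constructor
  · intro a₁ a₂ b₁ b₂ ha₁ ha₂ hb₁ hb₂ R
    have hRa₂ : ‖act R a₂‖ = 1 := by
      rw [act, Matrix.norm_toEuclideanLin_of_mem_unitaryGroup R.2.1, ha₂]
    linarith [real_inner_add_le_two ha₁ ha₂ hb₁, real_inner_sub_le_two ha₁ hRa₂ hb₂]
  · let d : Fin 3 → ℝ := ![-1, -1, 1]
    let a : EuclideanSpace ℝ (Fin 3) := EuclideanSpace.single 0 1
    have ha : ‖a‖ = 1 := by simp [a]
    have hR : Matrix.diagonal d ∈ Matrix.specialOrthogonalGroup (Fin 3) ℝ :=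
      Matrix.diagonal_mem_specialOrthogonalGroup (fun i ↦ by fin_cases i <;> norm_num [d])
        (by norm_num [d, Fin.prod_univ_succ])
    have hRa : act (Matrix.diagonal d) a = -a := by
      simp [act, a, Matrix.toEuclideanLin_diagonal_single, d]
    refine ⟨a, a, a, a, ⟨_, hR⟩, ha, rfl, rfl, rfl, hRa, ?_⟩
    rw [hRa, sub_neg_eq_add, inner_add_left, real_inner_self_eq_norm_sq, ha]
    norm_num
end

section
/- Let γ be the 3×3 diagonal matrix diag(cos θ, cos φ, cos θ cos φ) and E = (0, 0, sin θ sin φ) with sin θ ≠ 0 and sin φ ≠ 0. Then for every unit vector r ∈ ℝ³ and every scalar f with |f| < 1, ‖f·E + γ r‖ < 1. -/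
open RealInnerProductSpace Real

lemma cauchy_aux (x y r0 r1 r2 : ℝ) (h : r0^2+r1^2+r2^2 = 1) :
    2*x*y*r2 ≤ x^2*(r0^2+r2^2) + y^2*(r1^2+r2^2) := by
  rcases le_total (x^2) (y^2) with hc | hc
  · nlinarith [sq_nonneg (y*r2 - x), mul_nonneg (sub_nonneg.2 hc) (sq_nonneg r1)]
  · nlinarith [sq_nonneg (x*r2 - y), mul_nonneg (sub_nonneg.2 hc) (sq_nonneg r0)]

lemma key (a s b t f r0 r1 r2 : ℝ) (ha : a^2+s^2 = 1) (hb : b^2+t^2 = 1)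
    (hr : r0^2+r1^2+r2^2 = 1) (hs : s ≠ 0) (ht : t ≠ 0) (hf : |f| < 1) :
    (a*r0)^2 + (b*r1)^2 + (f*(s*t) + a*b*r2)^2 < 1 := by
  have hX1 := cauchy_aux (s*b) (a*t) r0 r1 r2 hr
  have hr' : r0^2+r1^2+(-r2)^2 = 1 := by nlinarith
  have hX2 := cauchy_aux (s*b) (a*t) r0 r1 (-r2) hr'
  have hid1 : 1 - ((a*r0)^2+(b*r1)^2+((s*t)+a*b*r2)^2) =
      (s*b)^2*(r0^2+r2^2)+(a*t)^2*(r1^2+r2^2) - 2*(s*b)*(a*t)*r2 := by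
    linear_combination (b^2*r1^2 - b^2 - t^2) * ha + (a^2*r0^2 - 1) * hb
      - (a^2*b^2+s^2*b^2+a^2*t^2) * hr
  have hid2 : 1 - ((a*r0)^2+(b*r1)^2+(-(s*t)+a*b*r2)^2) =
      (s*b)^2*(r0^2+r2^2)+(a*t)^2*(r1^2+r2^2) + 2*(s*b)*(a*t)*r2 := by
    linear_combination (b^2*r1^2 - b^2 - t^2) * ha + (a^2*r0^2 - 1) * hb
      - (a^2*b^2+s^2*b^2+a^2*t^2) * hr
  have h1 : (a*r0)^2+(b*r1)^2+((s*t)+a*b*r2)^2 ≤ 1 := by linarith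
  have h2 : (a*r0)^2+(b*r1)^2+(-(s*t)+a*b*r2)^2 ≤ 1 := by nlinarith
  obtain ⟨hfl, hfr⟩ := abs_lt.mp hf
  have hst : 0 < s^2*t^2 := by positivity
  have hff : f^2 < 1 := by nlinarith
  nlinarith [mul_nonneg (by linarith : (0:ℝ) ≤ 1+f)
      (by linarith : (0:ℝ) ≤ 1 - ((a*r0)^2+(b*r1)^2+((s*t)+a*b*r2)^2)),
    mul_nonneg (by linarith : (0:ℝ) ≤ 1-f)
      (by linarith : (0:ℝ) ≤ 1 - ((a*r0)^2+(b*r1)^2+(-(s*t)+a*b*r2)^2)),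
    mul_pos hst (by linarith : (0:ℝ) < 1 - f^2)]

theorem stmt_11 (θ φ : ℝ) (hθ : Real.sin θ ≠ 0) (hφ : Real.sin φ ≠ 0) :
    ∀ r : EuclideanSpace ℝ (Fin 3), ‖r‖ = 1 → ∀ f : ℝ, |f| < 1 →
      ‖f • ((WithLp.equiv 2 (Fin 3 → ℝ)).symm
            ![0, 0, Real.sin θ * Real.sin φ]) +
        act (Matrix.diagonal ![Real.cos θ, Real.cos φ, Real.cos θ * Real.cos φ]) r‖ < 1 := by
  intro r hr f hf
  set v := f • ((WithLp.equiv 2 (Fin 3 → ℝ)).symm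
            ![0, 0, Real.sin θ * Real.sin φ]) +
        act (Matrix.diagonal ![Real.cos θ, Real.cos φ, Real.cos θ * Real.cos φ]) r with hv
  have hcomp : ∀ i : Fin 3, v i = f * (![0, 0, Real.sin θ * Real.sin φ] i) +
      (![Real.cos θ, Real.cos φ, Real.cos θ * Real.cos φ] i) * r i := by
    intro i
    simp [hv, act, Matrix.toEuclideanLin, Matrix.toLin'_apply, Matrix.mulVec_diagonal]
  have hnorm : ∀ x : EuclideanSpace ℝ (Fin 3), ‖x‖^2 = x 0^2 + x 1^2 + x 2^2 := by
    intro x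
    rw [EuclideanSpace.norm_eq, Real.sq_sqrt (by positivity)]
    simp [Fin.sum_univ_three, sq_abs]
  have hr3 : r 0^2 + r 1^2 + r 2^2 = 1 := by
    have := hnorm r; rw [hr] at this; linarith [this]
  have h0 := hcomp 0; have h1 := hcomp 1; have h2 := hcomp 2
  simp only [Matrix.cons_val_zero, Matrix.cons_val_one, Matrix.head_cons,
    Matrix.cons_val_two, Matrix.tail_cons] at h0 h1 h2
  have hsq : ‖v‖^2 < 1 := by
    rw [hnorm v, h0, h1, h2]
    have := key (Real.cos θ) (Real.sin θ) (Real.cos φ) (Real.sin φ) f (r 0) (r 1) (r 2)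
      (Real.cos_sq_add_sin_sq θ) (Real.cos_sq_add_sin_sq φ)
      hr3 hθ hφ hf
    nlinarith [this]
  nlinarith [norm_nonneg v, hsq]
end

section
/- Let γ = diag(cos θ, cos φ, cos θ cos φ). If there exist two linearly independent unit vectors u, w ∈ ℝ³ with ‖γ u‖ = ‖γ w‖ = 1, then γ is orthogonal (i.e., |cos θ| = |cos φ| = 1). -/
open RealInnerProductSpace Real

/-!
Every diagonal entry of γ has modulus at most 1, so `‖v‖² - ‖γ v‖² = ∑ⱼ (1 - γⱼ²) vⱼ²` is a sum of
nonnegative terms: a vector whose norm γ preserves vanishes at every coordinate where `|γⱼ| < 1`.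
Unless `|cos θ| = |cos φ| = 1`, at most one entry of γ has modulus 1 (the third is their product), so
all such vectors lie on one coordinate axis and no two of them are linearly independent.
-/

lemma toEuclideanLin_diagonal_apply {ι : Type*} [Fintype ι] [DecidableEq ι] (d : ι → ℝ)
    (v : EuclideanSpace ℝ ι) (i : ι) : Matrix.toEuclideanLin (Matrix.diagonal d) v i = d i * v i := by
  simp [Matrix.toEuclideanLin, Matrix.mulVec_diagonal]

lemma eq_zero_of_norm_toEuclideanLin_diagonal_eq {ι : Type*} [Fintype ι] [DecidableEq ι]
    {d : ι → ℝ} (hd : ∀ j, |d j| ≤ 1) {v : EuclideanSpace ℝ ι}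
    (hv : ‖Matrix.toEuclideanLin (Matrix.diagonal d) v‖ = ‖v‖) {i : ι} (hi : |d i| < 1) :
    v i = 0 := by
  have hdefect : ∑ j, (1 - d j ^ 2) * v j ^ 2 = 0 := by
    have := congrArg (· ^ 2) hv
    simp only [EuclideanSpace.real_norm_sq_eq, toEuclideanLin_diagonal_apply] at this
    simp only [sub_mul, one_mul, Finset.sum_sub_distrib, this, ← mul_pow, sub_self]
  have hnonneg : ∀ j ∈ Finset.univ, 0 ≤ (1 - d j ^ 2) * v j ^ 2 := fun j _ =>
    mul_nonneg (sub_nonneg.2 ((sq_le_one_iff_abs_le_one _).2 (hd j))) (sq_nonneg _)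
  have hi' : 0 < 1 - d i ^ 2 := sub_pos.2 ((sq_lt_one_iff_abs_lt_one _).2 hi)
  have := (Finset.sum_eq_zero_iff_of_nonneg hnonneg).1 hdefect i (Finset.mem_univ i)
  simpa [hi'.ne'] using this

lemma not_linearIndependent_pair_of_eq_zero_of_ne {ι : Type*} {u w : EuclideanSpace ℝ ι} (i : ι)
    (hu : ∀ j ≠ i, u j = 0) (hw : ∀ j ≠ i, w j = 0) : ¬ LinearIndependent ℝ ![u, w] := by
  intro hind
  have hcomb : w i • u + (-u i) • w = 0 := by
    ext j
    by_cases hj : j = i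
    · subst hj; simp [mul_comm]
    · simp [hu j hj, hw j hj]
  obtain ⟨-, hui⟩ := LinearIndependent.pair_iff.1 hind _ _ hcomb
  refine hind.ne_zero 0 (?_ : u = 0)
  ext j
  by_cases hj : j = i
  · subst hj; simpa using hui
  · simp [hu j hj]

lemma exists_forall_ne_abs_lt_one {c d : ℝ} (hc : |c| ≤ 1) (hd : |d| ≤ 1)
    (h : ¬(|c| = 1 ∧ |d| = 1)) : ∃ i, ∀ j ≠ i, |![c, d, c * d] j| < 1 := by
  rcases hc.lt_or_eq with hc' | hc'
  · refine ⟨1, fun j hj => ?_⟩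
    fin_cases j
    · simpa using hc'
    · exact absurd rfl hj
    · simpa [abs_mul] using mul_lt_one_of_nonneg_of_lt_one_left (abs_nonneg c) hc' hd
  · have hd' : |d| < 1 := hd.lt_of_ne fun h' => h ⟨hc', h'⟩
    refine ⟨0, fun j hj => ?_⟩
    fin_cases j
    · exact absurd rfl hj
    · simpa using hd'
    · simpa [abs_mul] using mul_lt_one_of_nonneg_of_lt_one_right hc (abs_nonneg d) hd'

theorem stmt_12 (θ φ : ℝ) (u w : EuclideanSpace ℝ (Fin 3))
    (hu : ‖u‖ = 1) (hw : ‖w‖ = 1) (hind : LinearIndependent ℝ ![u, w])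
    (hgu : ‖act (Matrix.diagonal ![Real.cos θ, Real.cos φ, Real.cos θ * Real.cos φ]) u‖ = 1)
    (hgw : ‖act (Matrix.diagonal ![Real.cos θ, Real.cos φ, Real.cos θ * Real.cos φ]) w‖ = 1) :
    |Real.cos θ| = 1 ∧ |Real.cos φ| = 1 := by
  have hγ : ∀ j, |![Real.cos θ, Real.cos φ, Real.cos θ * Real.cos φ] j| ≤ 1 := by
    intro j
    fin_cases j <;> simp [abs_mul, abs_cos_le_one,
      mul_le_one₀ (abs_cos_le_one θ) (abs_nonneg _) (abs_cos_le_one φ)]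
  by_contra hne
  obtain ⟨i, hi⟩ := exists_forall_ne_abs_lt_one (abs_cos_le_one θ) (abs_cos_le_one φ) hne
  exact not_linearIndependent_pair_of_eq_zero_of_ne i
    (fun j hj => eq_zero_of_norm_toEuclideanLin_diagonal_eq hγ (hgu.trans hu.symm) (hi j hj))
    (fun j hj => eq_zero_of_norm_toEuclideanLin_diagonal_eq hγ (hgw.trans hw.symm) (hi j hj)) hind
end

section
/- Let a₁, a₂, v, A, E, B ∈ ℝ³, and α, γ, β be 3×3 real matrices, b₁, b₂ ∈ ℝ³. Define E₁₃ = (γα a₁)·b₁ + (v·a₁)(E + γA)·b₁, E₁₄ = (βγα a₁)·b₂ + (v·a₁)(B + β(E + γA))·b₂, E₂₃ = (γ a₂)·b₁ + ((A + α v)·a₂)(E·b₁), E₂₄ = (βγ a₂)·b₂ + ((A + α v)·a₂)((B + βE)·b₂). Set ξ₁ = (v·a₁)E + γ((v·a₁)A + α a₁) and ξ₂ = γ a₂ + ((A + α v)·a₂)E. Then E₁₃ + E₁₄ + E₂₃ − E₂₄ = b₁·(ξ₁ + ξ₂) + b₂·(β(ξ₁ − ξ₂)) + (v·a₁ − (A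 + α v)·a₂)(B·b₂). -/
open RealInnerProductSpace Real

lemma act_add (M : Matrix (Fin 3) (Fin 3) ℝ) (x y : EuclideanSpace ℝ (Fin 3)) :
    act M (x + y) = act M x + act M y := by simp [act]

lemma act_sub (M : Matrix (Fin 3) (Fin 3) ℝ) (x y : EuclideanSpace ℝ (Fin 3)) :
    act M (x - y) = act M x - act M y := by simp [act]

lemma act_smul (M : Matrix (Fin 3) (Fin 3) ℝ) (c : ℝ) (x : EuclideanSpace ℝ (Fin 3)) :
    act M (c • x) = c • act M x := by simp [act]

theorem stmt_18 (a₁ a₂ v A E B b₁ b₂ : EuclideanSpace ℝ (Fin 3))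
    (α γ β : Matrix (Fin 3) (Fin 3) ℝ) :
    (⟪act γ (act α a₁), b₁⟫ + ⟪v, a₁⟫ * ⟪E + act γ A, b₁⟫) +
    (⟪act β (act γ (act α a₁)), b₂⟫ + ⟪v, a₁⟫ * ⟪B + act β (E + act γ A), b₂⟫) +
    (⟪act γ a₂, b₁⟫ + ⟪A + act α v, a₂⟫ * ⟪E, b₁⟫) -
    (⟪act β (act γ a₂), b₂⟫ + ⟪A + act α v, a₂⟫ * ⟪B + act β E, b₂⟫)
    = ⟪b₁, ((⟪v, a₁⟫ • E + act γ (⟪v, a₁⟫ • A + act α a₁)) +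
            (act γ a₂ + ⟪A + act α v, a₂⟫ • E))⟫ +
      ⟪b₂, act β ((⟪v, a₁⟫ • E + act γ (⟪v, a₁⟫ • A + act α a₁)) -
            (act γ a₂ + ⟪A + act α v, a₂⟫ • E))⟫ +
      (⟪v, a₁⟫ - ⟪A + act α v, a₂⟫) * ⟪B, b₂⟫ := by
  simp only [act_add, act_sub, act_smul, inner_add_left, inner_add_right,
    inner_sub_left, inner_sub_right, inner_smul_left, inner_smul_right,
    RCLike.conj_to_real]
  simp only [real_inner_comm b₁, real_inner_comm b₂]
  ring
end
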